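/- Let N ≥ 1, let ε₁,…,ε_N be real constants, let λ ∈ ℝ with λ ≠ 0, and let r₁,…,r_N : ℝ² → ℝ be smooth functions of (x,t) with 1 − r_m(x,t)/λ > 0 for all m and all (x,t), satisfying ∂_t r_i = [r_i − Σ_{m=1}^N ε_m r_m] ∂_x r_i for every i. Define μ(x,t) := Π_{m=1}^N (1 − r_m(x,t)/λ)^{−ε_m} (real powers of positive numbers) and a₁ := Σ_{m=1}^N ε_m r_m. Then ∂_t μ = ∂_x[(λ − a₁) μ] everywhere. -/

import Mathlib

/-! The logarithmic derivative of `μ` is `∑ ε_m ∂r_m / (λ - r_m)`. Substituting the system,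
`ε_m (r_m - a₁) / (λ - r_m) = -ε_m + (λ - a₁) ε_m / (λ - r_m)`, so
`∂ₜμ = -(∂ₓa₁) μ + (λ - a₁) ∂ₓμ = ∂ₓ[(λ - a₁) μ]`. -/

open Real Set

/-- Partial derivative in the first variable. -/
noncomputable def pdx (f : ℝ → ℝ → ℝ) (x t : ℝ) : ℝ := deriv (fun x' => f x' t) x

/-- Partial derivative in the second variable. -/
noncomputable def pdt (f : ℝ → ℝ → ℝ) (x t : ℝ) : ℝ := deriv (fun t' => f x t') t

theorem HasDerivAt.finset_prod_rpow_const {ι : Type*} {s : Finset ι} {f : ι → ℝ → ℝ}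
    {f' p : ι → ℝ} {y : ℝ} (hf : ∀ i ∈ s, HasDerivAt (f i) (f' i) y)
    (hne : ∀ i ∈ s, f i y ≠ 0) :
    HasDerivAt (fun z => ∏ i ∈ s, f i z ^ p i)
      ((∏ i ∈ s, f i y ^ p i) * ∑ i ∈ s, p i * f' i / f i y) y := by
  classical
  induction s using Finset.induction_on with
  | empty => simpa using hasDerivAt_const y (1 : ℝ)
  | insert j s hj ih =>
    simp only [Finset.prod_insert hj, Finset.sum_insert hj]
    have hj_ne := hne j (Finset.mem_insert_self j s)
    have hfj := (hf j (Finset.mem_insert_self j s)).rpow_const (p := p j) (Or.inl hj_ne)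
    refine (hfj.mul (ih (fun i hi => hf i (Finset.mem_insert_of_mem hi))
      (fun i hi => hne i (Finset.mem_insert_of_mem hi)))).congr_deriv ?_
    rw [rpow_sub_one hj_ne]
    field_simp

theorem sub_ne_zero_of_one_sub_div_ne_zero {K : Type*} [Field K] {a l : K} (hl : l ≠ 0)
    (h : 1 - a / l ≠ 0) : l - a ≠ 0 := by
  rwa [one_sub_div hl, div_ne_zero_iff, and_iff_left hl] at h

theorem HasDerivAt.finset_prod_one_sub_div_rpow_neg {ι : Type*} {s : Finset ι}
    {g : ι → ℝ → ℝ} {g' ε : ι → ℝ} {l y : ℝ} (hl : l ≠ 0)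
    (hg : ∀ i ∈ s, HasDerivAt (g i) (g' i) y) (hne : ∀ i ∈ s, 1 - g i y / l ≠ 0) :
    HasDerivAt (fun z => ∏ i ∈ s, (1 - g i z / l) ^ (-ε i))
      ((∏ i ∈ s, (1 - g i y / l) ^ (-ε i)) * ∑ i ∈ s, ε i * g' i / (l - g i y)) y := by
  refine (HasDerivAt.finset_prod_rpow_const
    (fun i hi => ((hg i hi).div_const l).const_sub 1) hne).congr_deriv ?_
  congr 1
  refine Finset.sum_congr rfl fun i hi => ?_
  have hli := sub_ne_zero_of_one_sub_div_ne_zero hl (hne i hi)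
  field_simp

theorem Finset.sum_mul_sub_mul_div_sub {K ι : Type*} [Field K] (s : Finset ι) (ε R r : ι → K)
    (a l : K) (hr : ∀ i ∈ s, l - r i ≠ 0) :
    ∑ i ∈ s, ε i * ((r i - a) * R i) / (l - r i)
      = -∑ i ∈ s, ε i * R i + (l - a) * ∑ i ∈ s, ε i * R i / (l - r i) := by
  rw [Finset.mul_sum, ← Finset.sum_neg_distrib, ← Finset.sum_add_distrib]
  refine Finset.sum_congr rfl fun i hi => ?_
  field_simp [hr i hi]
  ring

theorem hasDerivAt_pdx {f : ℝ → ℝ → ℝ} {x t : ℝ}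
    (hf : DifferentiableAt ℝ (fun p : ℝ × ℝ => f p.1 p.2) (x, t)) :
    HasDerivAt (fun x' => f x' t) (pdx f x t) x :=
  (hf.comp (f := fun x' => (x', t)) x
    (differentiableAt_id.prodMk (differentiableAt_const t))).hasDerivAt

theorem hasDerivAt_pdt {f : ℝ → ℝ → ℝ} {x t : ℝ}
    (hf : DifferentiableAt ℝ (fun p : ℝ × ℝ => f p.1 p.2) (x, t)) :
    HasDerivAt (fun t' => f x t') (pdt f x t) t :=
  (hf.comp (f := fun t' => (x, t')) t
    ((differentiableAt_const x).prodMk differentiableAt_id)).hasDerivAt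

theorem generating_function_of_conservation_laws_general
    (N : ℕ) (ε : Fin N → ℝ) (l : ℝ) (hl : l ≠ 0)
    (r : ℝ → ℝ → Fin N → ℝ)
    (hr : ContDiff ℝ (⊤ : ℕ∞) (fun p : ℝ × ℝ => r p.1 p.2))
    (hpos : ∀ (x t : ℝ) (m : Fin N), 0 < 1 - r x t m / l)
    (hsys : ∀ (i : Fin N) (x t : ℝ),
      pdt (fun x' t' => r x' t' i) x t
        = (r x t i - ∑ m, ε m * r x t m) * pdx (fun x' t' => r x' t' i) x t)
    (μ : ℝ → ℝ → ℝ)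
    (hμ : ∀ x t : ℝ, μ x t = ∏ m, (1 - r x t m / l) ^ (-(ε m)))
    (a1 : ℝ → ℝ → ℝ) (ha1 : ∀ x t : ℝ, a1 x t = ∑ m, ε m * r x t m) :
    ∀ x t : ℝ, pdt μ x t = pdx (fun x' t' => (l - a1 x' t') * μ x' t') x t := by
  intro x t
  have hrm (m : Fin N) : DifferentiableAt ℝ (fun p : ℝ × ℝ => r p.1 p.2 m) (x, t) :=
    differentiable_pi.1 (hr.differentiable (by simp)) m (x, t)
  have hRx (m : Fin N) := hasDerivAt_pdx (f := fun x' t' => r x' t' m) (hrm m)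
  have hRt (m : Fin N) := hasDerivAt_pdt (f := fun x' t' => r x' t' m) (hrm m)
  have hne (m : Fin N) (_ : m ∈ Finset.univ) : 1 - r x t m / l ≠ 0 := (hpos x t m).ne'
  have hμt : HasDerivAt (fun t' => μ x t')
      (μ x t * ∑ m, ε m * pdt (fun x' t' => r x' t' m) x t / (l - r x t m)) t := by
    simp only [hμ]
    exact .finset_prod_one_sub_div_rpow_neg hl (fun m _ => hRt m) hne
  have hμx : HasDerivAt (fun x' => μ x' t)
      (μ x t * ∑ m, ε m * pdx (fun x' t' => r x' t' m) x t / (l - r x t m)) x := by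
    simp only [hμ]
    exact .finset_prod_one_sub_div_rpow_neg hl (fun m _ => hRx m) hne
  have ha1x : HasDerivAt (fun x' => a1 x' t)
      (∑ m, ε m * pdx (fun x' t' => r x' t' m) x t) x := by
    simp only [ha1]
    exact .fun_sum fun m _ => (hRx m).const_mul (ε m)
  have hrhs : HasDerivAt (fun x' => (l - a1 x' t) * μ x' t) _ x := (ha1x.const_sub l).mul hμx
  rw [pdt, hμt.deriv, pdx, hrhs.deriv]
  simp only [hsys, ← ha1]
  rw [Finset.sum_mul_sub_mul_div_sub _ _ _ _ _ _
    fun m hm => sub_ne_zero_of_one_sub_div_ne_zero hl (hne m hm)]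
  ring

/-- For solutions of the generalized ε-system `∂ₜ rᵢ = [rᵢ − Σ ε_m r_m] ∂ₓ rᵢ`, the
generating function `μ = Π (1 − r_m/λ)^{−ε_m}` satisfies `∂ₜ μ = ∂ₓ[(λ − a₁) μ]`,
where `a₁ = Σ ε_m r_m`. -/
theorem generating_function_of_conservation_laws
    (N : ℕ) (hN : 1 ≤ N) (ε : Fin N → ℝ) (l : ℝ) (hl : l ≠ 0)
    (r : ℝ → ℝ → Fin N → ℝ)
    (hr : ContDiff ℝ (⊤ : ℕ∞) (fun p : ℝ × ℝ => r p.1 p.2))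
    (hpos : ∀ (x t : ℝ) (m : Fin N), 0 < 1 - r x t m / l)
    (hsys : ∀ (i : Fin N) (x t : ℝ),
      pdt (fun x' t' => r x' t' i) x t
        = (r x t i - ∑ m, ε m * r x t m) * pdx (fun x' t' => r x' t' i) x t)
    (μ : ℝ → ℝ → ℝ)
    (hμ : ∀ x t : ℝ, μ x t = ∏ m, (1 - r x t m / l) ^ (-(ε m)))
    (a1 : ℝ → ℝ → ℝ) (ha1 : ∀ x t : ℝ, a1 x t = ∑ m, ε m * r x t m) :
    ∀ x t : ℝ, pdt μ x t = pdx (fun x' t' => (l - a1 x' t') * μ x' t') x t :=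
  generating_function_of_conservation_laws_general N ε l hl r hr hpos hsys μ hμ a1 ha1
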